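/- (Compatibility conditions) Let J be a finite nonempty index set, let c_j for j ∈ J be value conditions, and let c(t, x) = min_{j ∈ J} c_j(t, x). Assume the value conditions are mutually compatible, i.e. for every i ∈ J and every (t, x) ∈ Dom(c_i) one has c(t, x) = c_i(t, x). Then M_c(t, x) = c(t, x) for all (t, x) ∈ Dom(c) if and only if for all (i, j) ∈ J × J and all (t, x) ∈ Dom(c_i), M_{c_j}(t, x) ≥ c_i(t, x). -/

import Mathlib

/-- The Lax–Hopf solution associated with a value condition `c : ℝ × ℝ → ℝ ∪ {+∞}`
(modeled with values in `EReal`), velocity set `U` and cost `φ`: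
`M_c(t, x) = inf { c(t − T, x + T·u) + T·φ(u) : T ≥ 0, u ∈ U }`. -/
noncomputable def laxHopf (U : Set ℝ) (φ : ℝ → ℝ) (c : ℝ × ℝ → EReal) (t x : ℝ) : EReal :=
  ⨅ (T : ℝ) (_ : 0 ≤ T) (u : ℝ) (_ : u ∈ U), c (t - T, x + T * u) + ((T * φ u : ℝ) : EReal)

/-! Since the Lax–Hopf formula is an infimum, `M_c` is monotone in `c`, lies below `c`
(take `T = 0`), and commutes with finite minima: `M_{min_j c_j} = min_j M_{c_j}`.
Hence on `Dom(c)`, where compatibility gives `c = c_i` for a minimising `i`, the identity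
`M_c = c` amounts to `c_i ≤ M_{c_j}` for every `j`. -/

section LaxHopf

variable (U : Set ℝ) (φ : ℝ → ℝ)

theorem laxHopf_le {c : ℝ × ℝ → EReal} {T u : ℝ} (hT : 0 ≤ T) (hu : u ∈ U) (t x : ℝ) :
    laxHopf U φ c t x ≤ c (t - T, x + T * u) + ((T * φ u : ℝ) : EReal) :=
  iInf_le_of_le T <| iInf_le_of_le hT <| iInf_le_of_le u <| iInf_le _ hu

theorem le_laxHopf_iff {c : ℝ × ℝ → EReal} {a : EReal} {t x : ℝ} :
    a ≤ laxHopf U φ c t x ↔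
      ∀ T, 0 ≤ T → ∀ u ∈ U, a ≤ c (t - T, x + T * u) + ((T * φ u : ℝ) : EReal) := by
  simp only [laxHopf, le_iInf_iff]

theorem laxHopf_le_self (hU : U.Nonempty) (c : ℝ × ℝ → EReal) (t x : ℝ) :
    laxHopf U φ c t x ≤ c (t, x) := by
  obtain ⟨u, hu⟩ := hU
  simpa using laxHopf_le U φ le_rfl hu t x (c := c)

theorem laxHopf_mono {c c' : ℝ × ℝ → EReal} (h : c ≤ c') (t x : ℝ) :
    laxHopf U φ c t x ≤ laxHopf U φ c' t x :=
  (le_laxHopf_iff U φ).2 fun _ hT _ hu =>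
    (laxHopf_le U φ hT hu t x).trans (add_le_add_left (h _) _)

theorem laxHopf_iInf {J : Type*} [Finite J] [Nonempty J] (c : J → ℝ × ℝ → EReal) (t x : ℝ) :
    laxHopf U φ (fun q => ⨅ j, c j q) t x = ⨅ j, laxHopf U φ (c j) t x := by
  refine le_antisymm (le_iInf fun j => laxHopf_mono U φ (fun q => iInf_le _ j) t x) ?_
  refine (le_laxHopf_iff U φ).2 fun T hT u hu => ?_
  obtain ⟨k, hk⟩ := exists_eq_ciInf_of_finite (f := fun j => c j (t - T, x + T * u))
  rw [← hk]
  exact iInf_le_of_le k (laxHopf_le U φ hT hu t x)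

end LaxHopf

theorem laxHopf_compatibility_general (U : Set ℝ) (hU : U.Nonempty) (φ : ℝ → ℝ)
    (J : Type) [Fintype J] [Nonempty J]
    (c : J → ℝ × ℝ → EReal)
    (hcompat : ∀ (i : J) (p : ℝ × ℝ), c i p < ⊤ → (⨅ j, c j p) = c i p) :
    (∀ p : ℝ × ℝ, (⨅ j, c j p) < ⊤ →
        laxHopf U φ (fun q => ⨅ j, c j q) p.1 p.2 = ⨅ j, c j p) ↔
      (∀ (i j : J) (p : ℝ × ℝ), c i p < ⊤ → c i p ≤ laxHopf U φ (c j) p.1 p.2) := by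
  constructor
  · intro hfixed i j p hi
    calc c i p = ⨅ j, c j p := (hcompat i p hi).symm
      _ = laxHopf U φ (fun q => ⨅ j, c j q) p.1 p.2 := (hfixed p ((iInf_le _ i).trans_lt hi)).symm
      _ ≤ laxHopf U φ (c j) p.1 p.2 := laxHopf_mono U φ (fun q => iInf_le _ j) p.1 p.2
  · intro hcond p hp
    obtain ⟨i, hi⟩ := exists_eq_ciInf_of_finite (f := fun j => c j p)
    refine le_antisymm (laxHopf_le_self U φ hU _ p.1 p.2) ?_
    rw [laxHopf_iInf, ← hi]
    exact le_iInf fun j => hcond i j p (hi ▸ hp)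

/-- **Compatibility conditions**: let `c` be the pointwise minimum of finitely many
mutually compatible value conditions `c_j` (i.e. `c = c_i` on `Dom(c_i)` for each `i`).
Then `M_c = c` on `Dom(c)` if and only if `M_{c_j}(t, x) ≥ c_i(t, x)` for all `(i, j)`
and all `(t, x) ∈ Dom(c_i)`. -/
theorem laxHopf_compatibility (U : Set ℝ) (hU : U.Nonempty) (φ : ℝ → ℝ)
    (J : Type) [Fintype J] [Nonempty J]
    (c : J → ℝ × ℝ → EReal) (hc : ∀ (j : J) (p : ℝ × ℝ), c j p ≠ ⊥)
    (hcompat : ∀ (i : J) (p : ℝ × ℝ), c i p < ⊤ → (⨅ j, c j p) = c i p) :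
    (∀ p : ℝ × ℝ, (⨅ j, c j p) < ⊤ →
        laxHopf U φ (fun q => ⨅ j, c j q) p.1 p.2 = ⨅ j, c j p) ↔
      (∀ (i j : J) (p : ℝ × ℝ), c i p < ⊤ → c i p ≤ laxHopf U φ (c j) p.1 p.2) :=
  laxHopf_compatibility_general U hU φ J c hcompat
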